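/- Tradeoff between number of nodes and covering length for the protocol T_n under the static semantics: for every n ≥ 1, (i) there exists a static execution of T_n covering {☺} with n + 2 nodes and length 2n (linear in n), while (ii) every static execution of T_n covering {☺} with exactly 3 nodes has length at least n² (quadratic in n). -/

import Mathlib

/-- A broadcast protocol over finite state set `Q` and finite message alphabet `M`.
`I` is the set of initial states, `br q m q'` means `(q, !!m, q') ∈ Δ` (a broadcast
transition) and `rcv q m q'` means `(q, ??m, q') ∈ Δ` (a reception transition).
The protocol is complete for receptions. -/
structure BroadcastProtocol (Q M : Type) [Fintype Q] [DecidableEq Q] [Fintype M] where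
  I : Finset Q
  br : Q → M → Q → Prop
  rcv : Q → M → Q → Prop
  complete : ∀ q m, ∃ q', rcv q m q'

section Execs
variable {Q M : Type} [Fintype Q] [DecidableEq Q] [Fintype M]

/-- A static execution of length `r` over the finite node type `ν`: the communication
topology `E` is fixed throughout and every broadcast reaches all neighbours. -/
structure SExec (P : BroadcastProtocol Q M) (ν : Type) [Fintype ν] [DecidableEq ν]
    (r : ℕ) where
  lab : Fin (r + 1) → ν → Q
  E : ν → ν → Prop
  E_symm : Symmetric E
  E_irrefl : Irreflexive E
  sender : Fin r → ν
  msg : Fin r → M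
  init : ∀ v, lab 0 v ∈ P.I
  step_br : ∀ i : Fin r, P.br (lab i.castSucc (sender i)) (msg i) (lab i.succ (sender i))
  step_rcv : ∀ i : Fin r, ∀ v, v ≠ sender i →
    (E (sender i) v → P.rcv (lab i.castSucc v) (msg i) (lab i.succ v)) ∧
    (¬ E (sender i) v → lab i.succ v = lab i.castSucc v)

namespace SExec

variable {P : BroadcastProtocol Q M} {ν : Type} [Fintype ν] [DecidableEq ν] {r : ℕ}

/-- Labelling of the last configuration. -/
def lastLab (ρ : SExec P ν r) : ν → Q := ρ.lab (Fin.last r)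

/-- The execution covers `F` if a node of the last configuration is labelled in `F`. -/
def Covers (ρ : SExec P ν r) (F : Set Q) : Prop := ∃ v, ρ.lastLab v ∈ F

end SExec

end Execs
/- ## The tradeoff protocol T_n -/

abbrev TnQ (n : ℕ) := Fin (n + 1) ⊕ Fin n
abbrev TnM (n : ℕ) := Option (Fin n)

def TnBr (n : ℕ) : TnQ n → TnM n → TnQ n → Prop
  | .inl k, none, q' => (k : ℕ) = 0 ∧ q' = .inl k
  | .inl k, some _, q' => (k : ℕ) = n ∧ q' = .inl ⟨0, Nat.succ_pos n⟩
  | _, _, _ => False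

def TnRcvF (n : ℕ) (q : TnQ n) (m : TnM n) : TnQ n :=
  match q, m with
  | .inl k, none => if h : (k : ℕ) + 1 < n + 1 then .inl ⟨(k : ℕ) + 1, h⟩ else .inl k
  | .inl k, some i => if (k : ℕ) = n ∧ (i : ℕ) = 0 then .inr ⟨0, Fin.pos i⟩ else .inl k
  | .inr j, some i =>
      if h : (i : ℕ) = (j : ℕ) + 1 ∧ (j : ℕ) + 1 < n then .inr ⟨(j : ℕ) + 1, h.2⟩
      else .inr j
  | .inr j, none => .inr j

def TnProt (n : ℕ) : BroadcastProtocol (TnQ n) (TnM n) where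
  I := {Sum.inl (0 : Fin (n + 1))}
  br := TnBr n
  rcv := fun q m q' => q' = TnRcvF n q m
  complete := fun q m => ⟨TnRcvF n q m, rfl⟩

def TnSmiley (n : ℕ) (hn : 1 ≤ n) : TnQ n := Sum.inr ⟨n - 1, by omega⟩


/-! With three nodes, a node that is to reach `☺ = r_n` has to receive `b_1, …, b_n` in order,
each from another node sitting in `q_n`. That node falls back to `q_0` and climbs back only
through `n` receptions of `a`, broadcast by the single remaining node, which must itself sit in
`q_0`; so each message `b_i` costs about `n` steps. Made precise, this is a potential that is at
least `n²` initially, `0` once `☺` is reached, and drops by at most one per step.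

With `n + 2` nodes the climbs run in parallel: a hub in `q_0` broadcasts `a` `n` times, lifting
the target and `n` workers to `q_n`, and then worker `i` sends `b_{i+1}` to the target. -/

lemma Fin.apply_zero_le_apply_last_add {r : ℕ} (f : Fin (r + 1) → ℕ)
    (h : ∀ i : Fin r, f i.castSucc ≤ f i.succ + 1) : f 0 ≤ f (Fin.last r) + r := by
  suffices ∀ i : Fin (r + 1), f 0 ≤ f i + i from this (Fin.last r)
  intro i
  induction i using Fin.induction with
  | zero => simp
  | succ i ih => have := h i; simp only [Fin.val_succ, Fin.val_castSucc] at ih ⊢; omega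

namespace SExec

variable {Q M : Type} [Fintype Q] [DecidableEq Q] [Fintype M] {P : BroadcastProtocol Q M}
  {ν ν' : Type} [Fintype ν] [DecidableEq ν] [Fintype ν'] [DecidableEq ν'] {r : ℕ}

lemma rcv_or_eq (ρ : SExec P ν r) (i : Fin r) {v : ν} (hv : v ≠ ρ.sender i) :
    P.rcv (ρ.lab i.castSucc v) (ρ.msg i) (ρ.lab i.succ v) ∨
      ρ.lab i.succ v = ρ.lab i.castSucc v := by
  by_cases hE : ρ.E (ρ.sender i) v
  · exact .inl ((ρ.step_rcv i v hv).1 hE)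
  · exact .inr ((ρ.step_rcv i v hv).2 hE)

def relabel (ρ : SExec P ν r) (e : ν ≃ ν') : SExec P ν' r where
  lab i v := ρ.lab i (e.symm v)
  E u v := ρ.E (e.symm u) (e.symm v)
  E_symm _ _ h := ρ.E_symm h
  E_irrefl _ := ρ.E_irrefl _
  sender i := e (ρ.sender i)
  msg := ρ.msg
  init _ := ρ.init _
  step_br i := by simpa using ρ.step_br i
  step_rcv i v hv := by
    simpa using ρ.step_rcv i (e.symm v) (by rwa [ne_eq, Equiv.symm_apply_eq])

lemma covers_relabel (ρ : SExec P ν r) (e : ν ≃ ν') (F : Set Q) :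
    (ρ.relabel e).Covers F ↔ ρ.Covers F :=
  (e.symm.surjective.exists (p := fun v => ρ.lastLab v ∈ F)).symm

end SExec

section TnProtocol

variable {n : ℕ}

lemma tnBr_none_iff {s s' : TnQ n} : TnBr n s none s' ↔ s = .inl 0 ∧ s' = .inl 0 := by
  rcases s with k | j
  · simp only [TnBr, Sum.inl.injEq, Fin.ext_iff, Fin.val_zero]
    constructor <;> rintro ⟨hk, rfl⟩ <;> exact ⟨hk, by simp [Fin.ext_iff, hk]⟩
  · simp [TnBr]

lemma tnBr_some_iff {i : Fin n} {s s' : TnQ n} :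
    TnBr n s (some i) s' ↔ s = .inl (Fin.last n) ∧ s' = .inl 0 := by
  rcases s with k | j
  · simp [TnBr, Fin.ext_iff]
  · simp [TnBr]

def tnLevel : TnQ n → ℕ
  | .inl k => k
  | .inr _ => 0

@[simp] lemma tnLevel_inl (k : Fin (n + 1)) : tnLevel (.inl k : TnQ n) = k := rfl

@[simp] lemma tnLevel_inr (j : Fin n) : tnLevel (.inr j : TnQ n) = 0 := rfl

lemma tnLevel_le (s : TnQ n) : tnLevel s ≤ n := by
  cases s with
  | inl k => exact k.is_le
  | inr _ => exact Nat.zero_le n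

lemma tnLevel_rcv_none {s s' : TnQ n} (h : s' = TnRcvF n s none ∨ s' = s) :
    tnLevel s ≤ tnLevel s' ∧ tnLevel s' ≤ tnLevel s + 1 := by
  rcases h with rfl | rfl
  · cases s with
    | inl k => simp only [TnRcvF]; split_ifs <;> simp
    | inr j => simp [TnRcvF]
  · omega

lemma tnLevel_rcv_some {i : Fin n} {s s' : TnQ n} (h : s' = TnRcvF n s (some i) ∨ s' = s) :
    tnLevel s' ≤ tnLevel s := by
  rcases h with rfl | rfl
  · cases s with
    | inl k => simp only [TnRcvF]; split_ifs <;> simp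
    | inr j => simp only [TnRcvF]; split_ifs <;> simp
  · rfl

/-- A lower bound on the number of steps a node in state `s` still needs to reach `☺` when the
two other nodes are at levels `x` and `y`. In `r_{j+1}`, each of the `n - 1 - j` missing
messages `b_i` costs one broadcast and `n` receptions of `a` to refill its broadcaster, minus
the progress `x + y` already made; in `q_k` the node must still climb to `q_n` and then collect
all `n` messages. -/
def coverCost (n : ℕ) : TnQ n → ℕ → ℕ → ℕ
  | .inl k, x, y => (n - k) + (n ^ 2 - min x y)
  | .inr j, x, y => (n - 1 - j) + ((n - 1 - j) * n - (x + y))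

lemma coverCost_comm (s : TnQ n) (x y : ℕ) : coverCost n s x y = coverCost n s y x := by
  cases s <;> simp [coverCost, Nat.min_comm, Nat.add_comm]

section Step

variable {m : TnM n} {a a' b b' c c' : TnQ n}

lemma coverCost_sender_le (ha : TnBr n a m a') (hb : b' = TnRcvF n b m ∨ b' = b)
    (hc : c' = TnRcvF n c m ∨ c' = c) :
    coverCost n a (tnLevel b) (tnLevel c) ≤ coverCost n a' (tnLevel b') (tnLevel c') + 1 := by
  cases m with
  | none =>
    obtain ⟨rfl, rfl⟩ := tnBr_none_iff.1 ha
    have := tnLevel_rcv_none hb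
    have := tnLevel_rcv_none hc
    simp only [coverCost]
    omega
  | some i =>
    obtain ⟨rfl, rfl⟩ := tnBr_some_iff.1 ha
    have := tnLevel_le b'
    have : n ≤ n ^ 2 := Nat.le_self_pow two_ne_zero n
    simp only [coverCost, Fin.val_last, Fin.val_zero]
    omega

lemma coverCost_receiver_le (ha : TnBr n a m a') (hb : b' = TnRcvF n b m ∨ b' = b)
    (hc : c' = TnRcvF n c m ∨ c' = c) :
    coverCost n b (tnLevel a) (tnLevel c) ≤ coverCost n b' (tnLevel a') (tnLevel c') + 1 := by
  have := tnLevel_le c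
  cases m with
  | none =>
    obtain ⟨rfl, rfl⟩ := tnBr_none_iff.1 ha
    have := tnLevel_rcv_none hc
    rcases b with k | j <;> rcases hb with rfl | rfl <;> try simp only [TnRcvF]
    all_goals try split_ifs
    all_goals simp only [coverCost, tnLevel_inl, Fin.val_zero]; omega
  | some i =>
    obtain ⟨rfl, rfl⟩ := tnBr_some_iff.1 ha
    have := tnLevel_rcv_some hc
    rcases b with k | j
    · have hsq : n ^ 2 = (n - 1) * n + n := by cases n <;> simp [Nat.succ_mul, sq]
      rcases hb with rfl | rfl <;> try simp only [TnRcvF]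
      all_goals try split_ifs
      all_goals simp only [coverCost, tnLevel_inl, Fin.val_zero, Fin.val_last, Nat.sub_zero]
      all_goals omega
    · have hR : j + 1 < n → (n - 1 - j) * n = (n - 1 - (j + 1)) * n + n := fun h => by
        rw [← Nat.succ_mul]; congr 1; omega
      rcases hb with rfl | rfl <;> try simp only [TnRcvF]
      all_goals try split_ifs
      all_goals simp only [coverCost, tnLevel_inl, Fin.val_zero, Fin.val_last]; omega

end Step

/-- Node `v` is the one meant to reach `☺`; `v + 1` and `v + 2` are the two others. -/
def coverPotential (n : ℕ) (s : Fin 3 → TnQ n) (v : Fin 3) : ℕ :=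
  coverCost n (s v) (tnLevel (s (v + 1))) (tnLevel (s (v + 2)))

lemma coverPotential_le_of_step {m : TnM n} {s s' : Fin 3 → TnQ n} {w : Fin 3}
    (hbr : TnBr n (s w) m (s' w))
    (hrcv : ∀ u, u ≠ w → s' u = TnRcvF n (s u) m ∨ s' u = s u) (v : Fin 3) :
    coverPotential n s v ≤ coverPotential n s' v + 1 := by
  have hw : w = v ∨ w = v + 1 ∨ w = v + 2 := by fin_cases v <;> fin_cases w <;> decide
  rcases hw with rfl | rfl | rfl
  · exact coverCost_sender_le hbr (hrcv _ (by fin_cases w <;> decide))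
      (hrcv _ (by fin_cases w <;> decide))
  · exact coverCost_receiver_le hbr (hrcv _ (by fin_cases v <;> decide))
      (hrcv _ (by fin_cases v <;> decide))
  · rw [coverPotential, coverPotential, coverCost_comm (s v), coverCost_comm (s' v)]
    exact coverCost_receiver_le hbr (hrcv _ (by fin_cases v <;> decide))
      (hrcv _ (by fin_cases v <;> decide))

lemma sq_le_coverPotential_of_forall_eq_q0 {s : Fin 3 → TnQ n} (hs : ∀ u, s u = .inl 0)
    (v : Fin 3) : n ^ 2 ≤ coverPotential n s v := by
  simp [coverPotential, coverCost, hs]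

lemma coverPotential_eq_zero_of_eq_smiley (hn : 1 ≤ n) {s : Fin 3 → TnQ n} {v : Fin 3}
    (hv : s v = TnSmiley n hn) : coverPotential n s v = 0 := by
  simp [coverPotential, coverCost, hv, TnSmiley]

theorem SExec.sq_le_length_of_covers_smiley (hn : 1 ≤ n) {r : ℕ}
    (ρ : SExec (TnProt n) (Fin 3) r) (hρ : ρ.Covers {TnSmiley n hn}) : n ^ 2 ≤ r := by
  obtain ⟨v, hv⟩ := hρ
  have hinit : ∀ u, ρ.lab 0 u = .inl 0 := fun u => Finset.mem_singleton.1 (ρ.init u)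
  calc n ^ 2 ≤ coverPotential n (ρ.lab 0) v := sq_le_coverPotential_of_forall_eq_q0 hinit v
    _ ≤ coverPotential n ρ.lastLab v + r :=
      Fin.apply_zero_le_apply_last_add (fun i => coverPotential n (ρ.lab i) v) fun i =>
        coverPotential_le_of_step (ρ.step_br i) (fun _ hu => ρ.rcv_or_eq i hu) v
    _ = r := by rw [coverPotential_eq_zero_of_eq_smiley hn hv, zero_add]

def qState (n k : ℕ) : TnQ n := .inl ⟨min k n, by omega⟩

lemma qState_eq_of_le {k l : ℕ} (hk : n ≤ k) (hl : n ≤ l) : qState n k = qState n l := by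
  simp only [qState, Sum.inl.injEq, Fin.ext_iff]; omega

lemma tnRcvF_qState_none (k : ℕ) : TnRcvF n (qState n k) none = qState n (k + 1) := by
  simp only [TnRcvF, qState]
  split_ifs <;> simp only [Sum.inl.injEq, Fin.ext_iff] <;> omega

/-- Nodes `.inl w` are workers, `.inr 0` is the hub and `.inr 1` the target. The hub broadcasts
`a` at times `0, …, n - 1` and worker `w` broadcasts `b_{w+1}` at time `n + w`. -/
def shortLab (n : ℕ) (i : Fin (2 * n + 1)) : Fin n ⊕ Fin 2 → TnQ n
  | .inl w => if (i : ℕ) ≤ n + w then qState n i else qState n 0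
  | .inr 0 => qState n 0
  | .inr 1 => if h : (i : ℕ) ≤ n then qState n i else .inr ⟨i - n - 1, by have := i.is_lt; omega⟩

section ShortExec

variable {i : Fin (2 * n)}

lemma shortLab_succ_of_lt (h : (i : ℕ) < n) {v : Fin n ⊕ Fin 2} (hv : v ≠ .inr 0) :
    shortLab n i.succ v = TnRcvF n (shortLab n i.castSucc v) none := by
  rcases v with w | t
  · simp only [shortLab, Fin.val_succ, Fin.val_castSucc]
    rw [if_pos (by omega), if_pos (by omega), tnRcvF_qState_none]
  · fin_cases t
    · exact absurd rfl hv
    · simp only [shortLab, Fin.val_succ, Fin.val_castSucc]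
      rw [dif_pos (by omega), dif_pos (by omega), tnRcvF_qState_none]

lemma shortLab_succ_inr_of_le (h : n ≤ (i : ℕ)) (t : Fin 2) :
    shortLab n i.succ (.inr t) =
      TnRcvF n (shortLab n i.castSucc (.inr t)) (some ⟨i - n, by omega⟩) := by
  fin_cases t
  · simp only [shortLab, TnRcvF, qState]
    rw [if_neg (by simp; omega)]
  · simp only [shortLab, Fin.val_succ, Fin.val_castSucc]
    rw [dif_neg (by omega)]
    by_cases hin : (i : ℕ) = n
    · simp only [dif_pos hin.le, qState, TnRcvF]
      rw [if_pos (by simp; omega)]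
      simp only [Sum.inr.injEq, Fin.ext_iff]
      omega
    · simp only [dif_neg (show ¬ (i : ℕ) ≤ n by omega), TnRcvF]
      rw [dif_pos ⟨by omega, by omega⟩]
      simp only [Sum.inr.injEq, Fin.ext_iff]
      omega

lemma shortLab_succ_inl_of_ne {w : Fin n} (hw : (w : ℕ) ≠ i - n) (h : n ≤ (i : ℕ)) :
    shortLab n i.succ (.inl w) = shortLab n i.castSucc (.inl w) := by
  simp only [shortLab, Fin.val_succ, Fin.val_castSucc]
  by_cases hiw : (i : ℕ) < n + w
  · rw [if_pos (by omega), if_pos (by omega), qState_eq_of_le (k := i + 1) (by omega) (by omega)]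
  · rw [if_neg (by omega), if_neg (by omega)]

end ShortExec

def shortExec (n : ℕ) : SExec (TnProt n) (Fin n ⊕ Fin 2) (2 * n) where
  lab := shortLab n
  E u v := u ≠ v ∧ (u.isRight ∨ v.isRight)
  E_symm _ _ h := ⟨h.1.symm, h.2.symm⟩
  E_irrefl _ h := h.1 rfl
  sender i := if (i : ℕ) < n then .inr 0 else .inl ⟨i - n, by have := i.is_lt; omega⟩
  msg i := if (i : ℕ) < n then none else some ⟨i - n, by have := i.is_lt; omega⟩
  init v := by
    rcases v with w | t
    · simp [shortLab, qState, TnProt]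
    · fin_cases t <;> simp [shortLab, qState, TnProt]
  step_br i := by
    have := i.is_lt
    by_cases h : (i : ℕ) < n
    · simp [h, shortLab, TnProt, TnBr, qState]
    · simp only [h, if_false, shortLab, TnProt, Fin.val_succ, Fin.val_castSucc]
      rw [if_pos (by omega), if_neg (by omega)]
      exact ⟨by simp; omega, rfl⟩
  step_rcv i v hv := by
    have := i.is_lt
    by_cases h : (i : ℕ) < n
    · simp only [h, if_true] at hv ⊢
      exact ⟨fun _ => shortLab_succ_of_lt h hv, fun hE => absurd ⟨hv.symm, .inl rfl⟩ hE⟩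
    · simp only [h, if_false] at hv ⊢
      rcases v with w | t
      · refine ⟨fun hE => by simp at hE, fun _ => shortLab_succ_inl_of_ne ?_ (by omega)⟩
        exact fun hw => hv (congrArg Sum.inl (Fin.ext hw))
      · exact ⟨fun _ => shortLab_succ_inr_of_le (by omega) t,
          fun hE => absurd ⟨hv.symm, .inr rfl⟩ hE⟩

lemma shortExec_covers_smiley (hn : 1 ≤ n) : (shortExec n).Covers {TnSmiley n hn} := by
  refine ⟨.inr 1, ?_⟩
  simp only [SExec.lastLab, shortExec, shortLab, Fin.val_last, TnSmiley, Set.mem_singleton_iff]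
  rw [dif_neg (by omega)]
  simp only [Sum.inr.injEq, Fin.ext_iff]
  omega

end TnProtocol

/-- **Tradeoff between number of nodes and covering length** for the protocol `T_n`
under the static semantics: for every `n ≥ 1`, (i) there is a static execution of
`T_n` covering `{☺}` with `n + 2` nodes and length exactly `2n`, while (ii) every
static execution of `T_n` covering `{☺}` with exactly 3 nodes has length at least
`n²`. -/
theorem tradeoff_nodes_versus_length (n : ℕ) (hn : 1 ≤ n) :
    (∃ ρ : SExec (TnProt n) (Fin (n + 2)) (2 * n), ρ.Covers {TnSmiley n hn}) ∧
    (∀ (r : ℕ) (ρ : SExec (TnProt n) (Fin 3) r),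
      ρ.Covers {TnSmiley n hn} → n ^ 2 ≤ r) :=
  ⟨⟨(shortExec n).relabel finSumFinEquiv,
      ((shortExec n).covers_relabel _ _).2 (shortExec_covers_smiley hn)⟩,
    fun _ ρ hρ => ρ.sq_le_length_of_covers_smiley hn hρ⟩
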